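/- arXiv:1005.4045 — 3 statements merged into one kernel-verified Lean document; each statement's English description precedes it below -/
import Mathlib

section
/- For every η > 0 there is a constant C such that for every integer c and every j ≥ 1, the number of pairs (t₁, t₂) ∈ ℤ² × ℤ² with all coordinates of t₁, t₂ in absolute value in [2ʲ, 2^{j+1}) satisfying ω(t₁, t₂) = 2(t₁₂ t₂₁ − t₁₁ t₂₂) = c is at most C·2^{(2+η)j}. -/
/-!
Fix `t₁ = (a, b)`. The equation `ω(t₁, t₂) = c` is linear in `t₂ = (X, Y)`: `bX − aY = c/2`.
Since `a ≠ 0`, `X` determines `Y`, and the admissible `X` form one residue class modulo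
`|a| / gcd(a, b)`, so there are `O(gcd(a, b))` of them when `|a| ≍ 2ʲ`. Summing over `t₁`,
`∑ gcd(a, b) ≤ ∑_d d · #{multiples of d}² = O(4ʲ · j)`, and `j = O(2^{ηj})`.
-/

open Finset

/-- The symplectic form on `ℤ²`: `ω((a,b),(a',b')) = 2(b a' − a b')`. -/
def omega2 (s t : ℤ × ℤ) : ℤ := 2 * (s.2 * t.1 - s.1 * t.2)

theorem card_filter_product_eq_sum {α β : Type*} (s : Finset α) (t : Finset β) (P : α → β → Prop)
    [∀ a, DecidablePred (P a)] : #{x ∈ s ×ˢ t | P x.1 x.2} = ∑ a ∈ s, #{b ∈ t | P a b} := by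
  simp only [card_filter, sum_product]

theorem card_le_of_modEq_of_subset_Icc {F : Finset ℤ} {s t q : ℤ} (hst : s ≤ t) (hq : 0 < q)
    (hF : F ⊆ Icc s t) (hmod : ∀ x ∈ F, ∀ y ∈ F, x ≡ y [ZMOD q]) :
    (#F : ℝ) ≤ (t - s) / q + 1 := by
  set K := (t - s) / q
  have hcard : #F ≤ #(Icc 0 K) := by
    refine card_le_card_of_injOn (fun x => (x - s) / q) (fun x hx => ?_) (fun x hx y hy hxy => ?_)
    · obtain ⟨hsx, hxt⟩ := mem_Icc.mp (hF hx)
      exact mem_Icc.mpr ⟨Int.ediv_nonneg (by omega) hq.le, Int.ediv_le_ediv hq (by omega)⟩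
    · have hres : (x - s) % q = (y - s) % q := Int.ModEq.sub_right s (hmod x hx y hy)
      have hx' := Int.emod_add_ediv_mul (x - s) q
      have hy' := Int.emod_add_ediv_mul (y - s) q
      simp only at hxy
      rw [hxy, hres] at hx'
      linarith
  have hK0 : 0 ≤ K := Int.ediv_nonneg (by omega) hq.le
  rw [Int.card_Icc] at hcard
  have hF' : (#F : ℝ) ≤ K + 1 := by exact_mod_cast (by omega : (#F : ℤ) ≤ K + 1)
  have hK : (K : ℝ) ≤ (t - s) / q :=
    (le_div_iff₀ (by exact_mod_cast hq)).mpr (by exact_mod_cast Int.ediv_mul_le (t - s) hq.ne')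
  linarith

section BoundedIntegers

variable {B : Finset ℤ} {R : ℕ}

theorem card_filter_dvd_le (hB : B ⊆ Icc (-R : ℤ) R) {d : ℕ} (hd : 0 < d) :
    (#{x ∈ B | (d : ℤ) ∣ x} : ℝ) ≤ 2 * R / d + 1 := by
  have h := card_le_of_modEq_of_subset_Icc (by omega) (by exact_mod_cast hd : (0 : ℤ) < d)
    ((filter_subset _ B).trans hB) fun x hx y hy =>
      (Int.modEq_zero_iff_dvd.2 (mem_filter.1 hx).2).trans
        (Int.modEq_zero_iff_dvd.2 (mem_filter.1 hy).2).symm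
  refine h.trans_eq ?_
  push_cast
  ring

theorem card_filter_sub_eq_le (hB : B ⊆ Icc (-R : ℤ) R) {a : ℤ} (ha : a ≠ 0) (b k : ℤ) :
    (#{q ∈ B ×ˢ B | b * q.1 - a * q.2 = k} : ℝ) ≤ 2 * R * Int.gcd a b / |a| + 1 := by
  set F := {q ∈ B ×ˢ B | b * q.1 - a * q.2 = k}
  have hF : ∀ q ∈ F, q.1 ∈ B ∧ b * q.1 - a * q.2 = k := fun q hq => by
    obtain ⟨hq, hk⟩ := mem_filter.1 hq
    exact ⟨(mem_product.1 hq).1, hk⟩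
  have hinj : Set.InjOn Prod.fst (F : Set (ℤ × ℤ)) := fun q hq r hr hqr => by
    have := (hF q hq).2
    have := (hF r hr).2
    exact Prod.ext hqr (mul_left_cancel₀ ha (by rw [hqr] at *; linarith))
  set g : ℤ := (Int.gcd |a| b : ℤ)
  have hg : (g : ℝ) = Int.gcd a b := by simp [g, Int.gcd, Int.natAbs_abs]
  have hga : g ∣ |a| := Int.gcd_dvd_left _ _
  have hg0 : 0 < g := Int.natCast_pos.2 <| Int.gcd_pos_of_ne_zero_left b (abs_ne_zero.2 ha)
  have hq : 0 < |a| / g := Int.ediv_pos_of_pos_of_dvd (abs_pos.2 ha) hg0.le hga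
  have hmod : ∀ x ∈ F.image Prod.fst, ∀ y ∈ F.image Prod.fst, x ≡ y [ZMOD |a| / g] := by
    simp only [mem_image]
    rintro _ ⟨q, hq, rfl⟩ _ ⟨r, hr, rfl⟩
    refine Int.ModEq.cancel_left_div_gcd (c := b) (abs_pos.2 ha) (Int.modEq_iff_dvd.2 ?_)
    exact (abs_dvd _ _).2 ⟨r.2 - q.2, by linarith [(hF q hq).2, (hF r hr).2]⟩
  have himg : F.image Prod.fst ⊆ Icc (-R : ℤ) R := by
    simp only [subset_iff, mem_image]
    rintro _ ⟨q, hq, rfl⟩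
    exact hB (hF q hq).1
  have h := card_le_of_modEq_of_subset_Icc (by omega) hq himg hmod
  rw [card_image_of_injOn hinj, Int.cast_div hga (by exact_mod_cast hg0.ne')] at h
  refine h.trans_eq ?_
  rw [hg]
  push_cast
  field_simp
  ring

theorem card_filter_omega2_eq_le (hB : B ⊆ Icc (-R : ℤ) R) {p : ℤ × ℤ} (hp : p.1 ≠ 0) (c : ℤ) :
    (#{q ∈ B ×ˢ B | omega2 p q = c} : ℝ) ≤ 2 * R * Int.gcd p.1 p.2 / |p.1| + 1 := by
  have hsub : {q ∈ B ×ˢ B | omega2 p q = c} ⊆ {q ∈ B ×ˢ B | p.2 * q.1 - p.1 * q.2 = c / 2} :=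
    monotone_filter_right _ fun q _ hq => by unfold omega2 at hq; omega
  exact (Nat.cast_le.2 (card_le_card hsub)).trans (card_filter_sub_eq_le hB hp p.2 (c / 2))

theorem sum_gcd_le_sum_mul_sq (hB : B ⊆ Icc (-R : ℤ) R) (h0 : 0 ∉ B) :
    ∑ p ∈ B ×ˢ B, (Int.gcd p.1 p.2 : ℝ) ≤ ∑ d ∈ Icc 1 R, (d : ℝ) * #{x ∈ B | (d : ℤ) ∣ x} ^ 2 := by
  have hgcd : ∀ p ∈ B ×ˢ B, (Int.gcd p.1 p.2 : ℝ) ≤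
      ∑ d ∈ Icc 1 R, if (d : ℤ) ∣ p.1 ∧ (d : ℤ) ∣ p.2 then (d : ℝ) else 0 := by
    intro p hp
    have h1 := (mem_product.1 hp).1
    have hp1 : p.1 ≠ 0 := ne_of_mem_of_not_mem h1 h0
    have hR : p.1.natAbs ≤ R := by have := mem_Icc.1 (hB h1); omega
    have hg : Int.gcd p.1 p.2 ∈ Icc 1 R :=
      mem_Icc.2 ⟨Int.gcd_pos_of_ne_zero_left _ hp1, (Int.gcd_le_natAbs_left _ hp1).trans hR⟩
    simpa [Int.gcd_dvd_left, Int.gcd_dvd_right] using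
      single_le_sum (f := fun d : ℕ => if (d : ℤ) ∣ p.1 ∧ (d : ℤ) ∣ p.2 then (d : ℝ) else 0)
        (fun d _ => by positivity) hg
  calc ∑ p ∈ B ×ˢ B, (Int.gcd p.1 p.2 : ℝ)
      ≤ ∑ p ∈ B ×ˢ B, ∑ d ∈ Icc 1 R, if (d : ℤ) ∣ p.1 ∧ (d : ℤ) ∣ p.2 then (d : ℝ) else 0 :=
        sum_le_sum hgcd
    _ = ∑ d ∈ Icc 1 R, ∑ p ∈ B ×ˢ B, if (d : ℤ) ∣ p.1 ∧ (d : ℤ) ∣ p.2 then (d : ℝ) else 0 :=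
        sum_comm
    _ = ∑ d ∈ Icc 1 R, (d : ℝ) * #{x ∈ B | (d : ℤ) ∣ x} ^ 2 := by
        refine sum_congr rfl fun d _ => ?_
        rw [← sum_filter, filter_product, sum_const, card_product, nsmul_eq_mul]
        push_cast
        ring

theorem sum_gcd_le_sq_mul_log (hB : B ⊆ Icc (-R : ℤ) R) (h0 : 0 ∉ B) :
    ∑ p ∈ B ×ˢ B, (Int.gcd p.1 p.2 : ℝ) ≤ R ^ 2 * (9 + 4 * Real.log R) := by
  have hterm : ∀ d ∈ Icc 1 R,
      (d : ℝ) * #{x ∈ B | (d : ℤ) ∣ x} ^ 2 ≤ 4 * R ^ 2 * (d : ℝ)⁻¹ + 5 * R := by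
    intro d hd
    obtain ⟨hd1, hdR⟩ := mem_Icc.1 hd
    have hd0 : (0 : ℝ) < d := by exact_mod_cast hd1
    have hdR' : (d : ℝ) ≤ R := by exact_mod_cast hdR
    calc (d : ℝ) * #{x ∈ B | (d : ℤ) ∣ x} ^ 2 ≤ d * (2 * R / d + 1) ^ 2 := by
          gcongr
          exact card_filter_dvd_le hB hd1
      _ = 4 * R ^ 2 * (d : ℝ)⁻¹ + 4 * R + d := by field_simp; ring
      _ ≤ 4 * R ^ 2 * (d : ℝ)⁻¹ + 5 * R := by linarith
  have hharm : ∑ d ∈ Icc 1 R, (d : ℝ)⁻¹ ≤ 1 + Real.log R := by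
    have := harmonic_le_one_add_log R
    rw [harmonic_eq_sum_Icc] at this
    push_cast at this
    exact this
  calc ∑ p ∈ B ×ˢ B, (Int.gcd p.1 p.2 : ℝ)
      ≤ ∑ d ∈ Icc 1 R, (4 * R ^ 2 * (d : ℝ)⁻¹ + 5 * R) :=
        (sum_gcd_le_sum_mul_sq hB h0).trans (sum_le_sum hterm)
    _ = 4 * R ^ 2 * ∑ d ∈ Icc 1 R, (d : ℝ)⁻¹ + 5 * R ^ 2 := by
        rw [sum_add_distrib, ← mul_sum, sum_const, Nat.card_Icc, nsmul_eq_mul]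
        push_cast
        ring
    _ ≤ R ^ 2 * (9 + 4 * Real.log R) := by nlinarith [sq_nonneg (R : ℝ)]

end BoundedIntegers

noncomputable def dyadicShell (N : ℕ) : Finset ℤ := {x ∈ Ioo (-(2 * N : ℤ)) (2 * N) | (N : ℤ) ≤ |x|}

theorem mem_dyadicShell {N : ℕ} {x : ℤ} : x ∈ dyadicShell N ↔ (N : ℤ) ≤ |x| ∧ |x| < 2 * N := by
  rw [dyadicShell, mem_filter, mem_Ioo, abs_lt, and_comm]

theorem card_omega2_level_le (N : ℕ) (c : ℤ) :
    (#{t ∈ (dyadicShell N ×ˢ dyadicShell N) ×ˢ (dyadicShell N ×ˢ dyadicShell N) |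
        omega2 t.1 t.2 = c} : ℝ) ≤ N ^ 2 * (160 + 64 * Real.log (2 * N)) := by
  set S := dyadicShell N
  have hS : S ⊆ Icc (-((2 * N : ℕ) : ℤ)) ((2 * N : ℕ) : ℤ) := fun x hx => by
    have := abs_lt.1 (mem_dyadicShell.1 hx).2
    rw [mem_Icc]
    push_cast
    constructor <;> linarith
  have h0 : (0 : ℤ) ∉ S := fun h => by
    have := mem_dyadicShell.1 h
    rw [abs_zero] at this
    omega
  have hcardS : (#S : ℝ) ≤ 4 * N := by
    have h : #S ≤ #(Ioo (-(2 * N : ℤ)) (2 * N)) := card_filter_le _ _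
    rw [Int.card_Ioo] at h
    exact_mod_cast (by omega : #S ≤ 4 * N)
  have hfiber : ∀ p ∈ S ×ˢ S,
      (#{q ∈ S ×ˢ S | omega2 p q = c} : ℝ) ≤ 4 * Int.gcd p.1 p.2 + 1 := by
    intro p hp
    have hN1 : (N : ℝ) ≤ |(p.1 : ℝ)| := by exact_mod_cast (mem_dyadicShell.1 (mem_product.1 hp).1).1
    have hp1 : p.1 ≠ 0 := ne_of_mem_of_not_mem (mem_product.1 hp).1 h0
    refine (card_filter_omega2_eq_le hS hp1 c).trans ?_
    gcongr
    rw [div_le_iff₀ (by positivity)]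
    push_cast
    nlinarith [(by positivity : (0 : ℝ) ≤ Int.gcd p.1 p.2)]
  calc (#{t ∈ (S ×ˢ S) ×ˢ (S ×ˢ S) | omega2 t.1 t.2 = c} : ℝ)
      = ∑ p ∈ S ×ˢ S, (#{q ∈ S ×ˢ S | omega2 p q = c} : ℝ) := by
        exact_mod_cast card_filter_product_eq_sum _ _ fun p q => omega2 p q = c
    _ ≤ ∑ p ∈ S ×ˢ S, (4 * (Int.gcd p.1 p.2 : ℝ) + 1) := sum_le_sum hfiber
    _ = 4 * ∑ p ∈ S ×ˢ S, (Int.gcd p.1 p.2 : ℝ) + #S ^ 2 := by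
        rw [sum_add_distrib, ← mul_sum, sum_const, card_product, nsmul_eq_mul]
        push_cast
        ring
    _ ≤ 4 * (((2 * N : ℕ) : ℝ) ^ 2 * (9 + 4 * Real.log (2 * N : ℕ))) + (4 * N) ^ 2 := by
        gcongr
        exact sum_gcd_le_sq_mul_log hS h0
    _ = N ^ 2 * (160 + 64 * Real.log (2 * N)) := by
        push_cast
        ring

theorem one_add_le_mul_two_rpow {η : ℝ} (hη : 0 < η) {x : ℝ} (hx : 0 ≤ x) :
    1 + x ≤ (1 + (η * Real.log 2)⁻¹) * 2 ^ (η * x) := by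
  set k := η * Real.log 2
  have hk : 0 < k := mul_pos hη (Real.log_pos one_lt_two)
  have hexp : (2 : ℝ) ^ (η * x) = Real.exp (k * x) := by
    rw [Real.rpow_def_of_pos two_pos, mul_left_comm, ← mul_assoc]
  calc 1 + x ≤ (1 + k⁻¹) * (k * x + 1) := by
        have : k⁻¹ * (k * x) = x := by field_simp
        nlinarith [inv_pos.2 hk, mul_nonneg hk.le hx]
    _ ≤ (1 + k⁻¹) * 2 ^ (η * x) := by
        rw [hexp]
        gcongr
        exact Real.add_one_le_exp _

/-- For every `η > 0` there is a constant `C` such that for every integer `c` and every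
`j ≥ 1`, the number of pairs `(t₁,t₂) ∈ ℤ² × ℤ²` with all coordinates of absolute value
in `[2ʲ, 2^(j+1))` satisfying `ω(t₁,t₂) = c` is at most `C·2^((2+η)j)`. -/
theorem symplectic_level_count (η : ℝ) (hη : 0 < η) :
    ∃ C : ℝ, 0 < C ∧ ∀ (c : ℤ) (j : ℕ), 1 ≤ j →
      ((Set.ncard {t : (ℤ × ℤ) × (ℤ × ℤ) |
          (2 ^ j ≤ |t.1.1| ∧ |t.1.1| < 2 ^ (j + 1)) ∧
          (2 ^ j ≤ |t.1.2| ∧ |t.1.2| < 2 ^ (j + 1)) ∧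
          (2 ^ j ≤ |t.2.1| ∧ |t.2.1| < 2 ^ (j + 1)) ∧
          (2 ^ j ≤ |t.2.2| ∧ |t.2.2| < 2 ^ (j + 1)) ∧
          omega2 t.1 t.2 = c} : ℝ))
        ≤ C * (2 : ℝ) ^ ((2 + η) * j) := by
  refine ⟨224 * (1 + (η * Real.log 2)⁻¹), by positivity, fun c j _ => ?_⟩
  set S := dyadicShell (2 ^ j)
  have hlog : Real.log (2 * (2 ^ j : ℕ)) ≤ j + 1 := by
    rw [Nat.cast_pow, Nat.cast_ofNat, ← pow_succ', Real.log_pow]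
    push_cast
    nlinarith [Real.log_two_lt_d9]
  have hpow : (2 : ℝ) ^ ((2 + η) * j) = ((2 ^ j : ℕ) : ℝ) ^ 2 * 2 ^ (η * j) := by
    rw [add_mul, Real.rpow_add two_pos, mul_comm (2 : ℝ), Real.rpow_mul two_pos.le]
    push_cast
    norm_cast
  rw [hpow]
  calc _ = (#{t ∈ (S ×ˢ S) ×ˢ (S ×ˢ S) | omega2 t.1 t.2 = c} : ℝ) := by
        rw [← Set.ncard_coe_finset]
        congr 2
        ext t
        simp only [S, Set.mem_ofPred_eq, coe_filter, mem_product, mem_dyadicShell, pow_succ]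
        push_cast
        simp only [mul_comm _ (2 : ℤ), and_assoc]
    _ ≤ ((2 ^ j : ℕ) : ℝ) ^ 2 * (160 + 64 * Real.log (2 * (2 ^ j : ℕ))) :=
        card_omega2_level_le _ c
    _ ≤ ((2 ^ j : ℕ) : ℝ) ^ 2 * (224 * (1 + j)) := by gcongr; linarith
    _ ≤ ((2 ^ j : ℕ) : ℝ) ^ 2 * (224 * ((1 + (η * Real.log 2)⁻¹) * 2 ^ (η * j))) := by
        gcongr
        exact one_add_le_mul_two_rpow hη (Nat.cast_nonneg j)
    _ = _ := by ring
end

section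
/- Let ω((a,b),(a',b')) = 2(b a' − a b') be the symplectic form on ℤ². For every η > 0 there is a constant C such that for every point (A, c) ∈ ℤ² × ℤ and every j ≥ 1, the number of triples (m₁, m₂, m₃) ∈ (ℤ²)³ with 2ʲ ≤ |mₗ| < 2^{j+1} for each l, satisfying m₁ − m₂ + m₃ = A and ω(y, m₁) − ω(y − m₁, m₂) + ω(y − m₁ + m₂, m₃) = c (for a fixed y ∈ ℤ²), is at most C·2^{(2+η)j}. -/
/-- The Euclidean norm of a point of `ℤ²`. -/
noncomputable def enorm2 (m : ℤ × ℤ) : ℝ := Real.sqrt ((m.1 : ℝ) ^ 2 + (m.2 : ℝ) ^ 2)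

open Finset

def supNorm (u : ℤ × ℤ) : ℕ := max u.1.natAbs u.2.natAbs

lemma card_Icc_neg_self (K : ℕ) : #(Icc (-(K : ℤ)) K) = 2 * K + 1 := by
  rw [Int.card_Icc, show (K : ℤ) + 1 - -K = ((2 * K + 1 : ℕ) : ℤ) by push_cast; ring,
    Int.toNat_natCast]

noncomputable def supBall (R : ℕ) : Finset (ℤ × ℤ) := Icc (-(R : ℤ)) R ×ˢ Icc (-(R : ℤ)) R

lemma mem_supBall {R : ℕ} {u : ℤ × ℤ} : u ∈ supBall R ↔ supNorm u ≤ R := by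
  simp only [supBall, mem_product, mem_Icc, supNorm, max_le_iff]
  omega

lemma supNorm_smul (t : ℤ) (u : ℤ × ℤ) : supNorm (t • u) = t.natAbs * supNorm u := by
  simp [supNorm, Int.natAbs_mul, Nat.mul_max_mul_left]

lemma supNorm_sub_le (u v : ℤ × ℤ) : supNorm (u - v) ≤ supNorm u + supNorm v := by
  simp only [supNorm, Prod.fst_sub, Prod.snd_sub]
  omega

lemma supNorm_pos {u : ℤ × ℤ} (hu : u ≠ 0) : 0 < supNorm u := by
  simp only [supNorm]
  contrapose! hu
  ext <;> simp <;> omega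

lemma card_supBall (R : ℕ) : #(supBall R) = (2 * R + 1) ^ 2 := by
  rw [supBall, card_product, card_Icc_neg_self, sq]

def content (u : ℤ × ℤ) : ℕ := Int.gcd u.1 u.2

def primitivePart (u : ℤ × ℤ) : ℤ × ℤ := (u.1 / content u, u.2 / content u)

lemma content_smul_primitivePart (u : ℤ × ℤ) : (content u : ℤ) • primitivePart u = u := by
  ext
  · exact Int.mul_ediv_cancel' (Int.gcd_dvd_left u.1 u.2)
  · exact Int.mul_ediv_cancel' (Int.gcd_dvd_right u.1 u.2)

lemma content_pos {u : ℤ × ℤ} (hu : u ≠ 0) : 0 < content u :=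
  Int.gcd_pos_iff.2 (by contrapose! hu; exact Prod.ext hu.1 hu.2)

lemma isCoprime_primitivePart {u : ℤ × ℤ} (hu : u ≠ 0) :
    IsCoprime (primitivePart u).1 (primitivePart u).2 :=
  Int.isCoprime_iff_gcd_eq_one.2 (Int.gcd_div_gcd_div_gcd (content_pos hu))

lemma primitivePart_ne_zero {u : ℤ × ℤ} (hu : u ≠ 0) : primitivePart u ≠ 0 := by
  intro h
  apply hu
  rw [← content_smul_primitivePart u, h, smul_zero]

lemma supNorm_eq_content_mul (u : ℤ × ℤ) : supNorm u = content u * supNorm (primitivePart u) := by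
  conv_lhs => rw [← content_smul_primitivePart u]
  rw [supNorm_smul, Int.natAbs_natCast]

lemma IsCoprime.exists_eq_mul {R : Type*} [CommRing R] {a b x y : R} (h : IsCoprime a b)
    (hxy : a * y = b * x) : ∃ t, x = t * a ∧ y = t * b := by
  obtain ⟨r, s, hrs⟩ := h
  exact ⟨r * x + s * y, by linear_combination (-x) * hrs - s * hxy,
    by linear_combination (-y) * hrs + r * hxy⟩

lemma omega2_smul_left (t : ℤ) (u v : ℤ × ℤ) : omega2 (t • u) v = t * omega2 u v := by
  simp only [omega2, Prod.smul_fst, Prod.smul_snd, smul_eq_mul]; ring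

lemma omega2_sub_right (u v w : ℤ × ℤ) : omega2 u (v - w) = omega2 u v - omega2 u w := by
  simp only [omega2, Prod.fst_sub, Prod.snd_sub]; ring

lemma exists_eq_smul_primitivePart {u w : ℤ × ℤ} (hu : u ≠ 0) (h : omega2 u w = 0) :
    ∃ t : ℤ, w = t • primitivePart u := by
  rw [← content_smul_primitivePart u, omega2_smul_left] at h
  have h' : (primitivePart u).1 * w.2 = (primitivePart u).2 * w.1 := by
    simp only [omega2, mul_eq_zero, Nat.cast_eq_zero, (content_pos hu).ne', two_ne_zero,
      false_or] at h
    linarith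
  obtain ⟨t, h1, h2⟩ := (isCoprime_primitivePart hu).exists_eq_mul h'
  exact ⟨t, Prod.ext h1 h2⟩

-- Two solutions differ by a multiple of the primitive part `p` of `u`, so the solutions in the
-- ball lie in a progression of at most `2 * (2R / |p|) + 1` points.
lemma card_supBall_filter_omega2_eq_le {u : ℤ × ℤ} (hu : u ≠ 0) (R : ℕ) (d : ℤ) :
    (#{w ∈ supBall R | omega2 u w = d} : ℝ) ≤ 4 * R / supNorm (primitivePart u) + 1 := by
  set p := primitivePart u
  have hp : 0 < supNorm p := supNorm_pos (primitivePart_ne_zero hu)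
  obtain hempty | ⟨w₀, hw₀⟩ := {w ∈ supBall R | omega2 u w = d}.eq_empty_or_nonempty
  · rw [hempty, card_empty, Nat.cast_zero]
    positivity
  rw [mem_filter] at hw₀
  set K := 2 * R / supNorm p
  have hsub : {w ∈ supBall R | omega2 u w = d} ⊆ (Icc (-(K : ℤ)) K).image (w₀ + · • p) := by
    intro w hw
    rw [mem_filter] at hw
    obtain ⟨t, ht⟩ : ∃ t : ℤ, w - w₀ = t • p := exists_eq_smul_primitivePart hu
      (by rw [omega2_sub_right, hw.2, hw₀.2, sub_self])
    have hnorm : t.natAbs * supNorm p ≤ 2 * R := by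
      rw [← supNorm_smul, ← ht]
      have := supNorm_sub_le w w₀
      have := mem_supBall.1 hw.1
      have := mem_supBall.1 hw₀.1
      omega
    have := (Nat.le_div_iff_mul_le hp).2 hnorm
    exact mem_image.2 ⟨t, mem_Icc.2 (by omega), by rw [← ht, add_sub_cancel]⟩
  calc (#{w ∈ supBall R | omega2 u w = d} : ℝ) ≤ #(Icc (-(K : ℤ)) K) := by
        exact_mod_cast (card_le_card hsub).trans card_image_le
    _ = 2 * (K : ℝ) + 1 := by rw [card_Icc_neg_self]; push_cast; ring
    _ ≤ 2 * ((2 * R : ℕ) / supNorm p) + 1 := by gcongr; exact Nat.cast_div_le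
    _ = 4 * R / supNorm p + 1 := by push_cast; ring

lemma sum_Icc_inv_natAbs_add_one_le (R : ℕ) :
    ∑ x ∈ Icc (-(R : ℤ)) R, (1 : ℝ) / (x.natAbs + 1) ≤ 2 * (1 + Real.log (R + 1)) := by
  set f : ℤ → ℝ := fun x => 1 / (x.natAbs + 1)
  have hf : ∀ x, 0 ≤ f x := fun x => by positivity
  set pos := (range (R + 1)).image (fun k : ℕ => (k : ℤ))
  set neg := (range (R + 1)).image (fun k : ℕ => -(k : ℤ))
  have hcover : Icc (-(R : ℤ)) R ⊆ pos ∪ neg := by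
    intro x hx
    rw [mem_Icc] at hx
    rw [mem_union, mem_image, mem_image]
    rcases le_or_gt 0 x with h | h
    · exact Or.inl ⟨x.toNat, mem_range.2 (by omega), by omega⟩
    · exact Or.inr ⟨(-x).toNat, mem_range.2 (by omega), by omega⟩
  calc ∑ x ∈ Icc (-(R : ℤ)) R, f x ≤ ∑ x ∈ pos ∪ neg, f x :=
        sum_le_sum_of_subset_of_nonneg hcover fun x _ _ => hf x
    _ ≤ ∑ x ∈ pos, f x + ∑ x ∈ neg, f x := by
        rw [← sum_union_inter]
        exact le_add_of_nonneg_right (sum_nonneg fun x _ => hf x)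
    _ ≤ 2 * (1 + Real.log (R + 1)) := by
        rw [sum_image (by intro a _ b _ h; simpa using h),
          sum_image (by intro a _ b _ h; simpa using h)]
        have := harmonic_le_one_add_log (R + 1)
        simp only [harmonic, Rat.cast_sum, Rat.cast_inv, Rat.cast_natCast] at this
        simp only [f, Int.natAbs_neg, Int.natAbs_natCast, one_div]
        push_cast at this
        linarith

lemma sum_inv_supNorm_sq_le (R : ℕ) :
    ∑ p ∈ (supBall R).erase 0, (1 : ℝ) / supNorm p ^ 2 ≤ 16 * (1 + Real.log (R + 1)) ^ 2 := by
  set f : ℤ → ℝ := fun x => 1 / (x.natAbs + 1)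
  have hf : ∀ x, 0 ≤ f x := fun x => by positivity
  -- `(|p₁| + 1) (|p₂| + 1) ≤ 4 |p|²` for `p ≠ 0`, and the right-hand side sum factors.
  have hpoint : ∀ p ∈ (supBall R).erase 0, (1 : ℝ) / supNorm p ^ 2 ≤ 4 * (f p.1 * f p.2) := by
    intro p hp
    have hs : (1 : ℝ) ≤ supNorm p := by exact_mod_cast supNorm_pos (ne_of_mem_erase hp)
    have h1 : (p.1.natAbs : ℝ) ≤ supNorm p := by exact_mod_cast le_max_left _ _
    have h2 : (p.2.natAbs : ℝ) ≤ supNorm p := by exact_mod_cast le_max_right _ _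
    simp only [f]
    rw [div_le_iff₀ (by positivity)]
    field_simp
    nlinarith
  calc ∑ p ∈ (supBall R).erase 0, (1 : ℝ) / supNorm p ^ 2
      ≤ ∑ p ∈ supBall R, 4 * (f p.1 * f p.2) :=
        (sum_le_sum hpoint).trans (sum_le_sum_of_subset_of_nonneg (erase_subset _ _)
          fun p _ _ => by have := hf p.1; have := hf p.2; positivity)
    _ = 4 * (∑ x ∈ Icc (-(R : ℤ)) R, f x) ^ 2 := by
        rw [← mul_sum, supBall, sum_product, sq, sum_mul_sum]
    _ ≤ 4 * (2 * (1 + Real.log (R + 1))) ^ 2 := by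
        gcongr
        exact sum_Icc_inv_natAbs_add_one_le R
    _ = 16 * (1 + Real.log (R + 1)) ^ 2 := by ring

lemma card_filter_primitivePart_eq_le (R : ℕ) (p : ℤ × ℤ) :
    #{u ∈ (supBall R).erase 0 | primitivePart u = p} ≤ R / supNorm p := by
  refine (card_le_card_of_injOn (t := Icc 1 (R / supNorm p)) content (fun u hu => ?_)
    (fun u hu v hv huv => ?_)).trans (by simp)
  · simp only [coe_filter, mem_erase, mem_supBall] at hu
    have hp := hu.2 ▸ supNorm_pos (primitivePart_ne_zero hu.1.1)
    rw [coe_Icc, Set.mem_Icc, Nat.le_div_iff_mul_le hp, ← hu.2, ← supNorm_eq_content_mul]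
    exact ⟨content_pos hu.1.1, hu.1.2⟩
  · simp only [coe_filter] at hu hv
    rw [← content_smul_primitivePart u, ← content_smul_primitivePart v, huv, hu.2, hv.2]

lemma sum_inv_supNorm_primitivePart_le (R : ℕ) :
    ∑ u ∈ (supBall R).erase 0, (1 : ℝ) / supNorm (primitivePart u)
      ≤ R * ∑ p ∈ (supBall R).erase 0, (1 : ℝ) / supNorm p ^ 2 := by
  have hmaps : ∀ u ∈ (supBall R).erase 0, primitivePart u ∈ (supBall R).erase 0 := by
    intro u hu
    rw [mem_erase, mem_supBall] at hu ⊢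
    refine ⟨primitivePart_ne_zero hu.1, le_trans ?_ hu.2⟩
    rw [supNorm_eq_content_mul u]
    exact Nat.le_mul_of_pos_left _ (content_pos hu.1)
  rw [← sum_fiberwise_of_maps_to hmaps, mul_sum]
  refine sum_le_sum fun p hp => ?_
  have hp0 : (0 : ℝ) < supNorm p := by exact_mod_cast supNorm_pos (ne_of_mem_erase hp)
  calc ∑ u ∈ (supBall R).erase 0 with primitivePart u = p, (1 : ℝ) / supNorm (primitivePart u)
      = #{u ∈ (supBall R).erase 0 | primitivePart u = p} * (1 / supNorm p) := by
        rw [sum_congr rfl fun u hu => by rw [(mem_filter.1 hu).2], sum_const, nsmul_eq_mul]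
    _ ≤ ((R / supNorm p : ℕ) : ℝ) * (1 / supNorm p) := by
        gcongr
        exact_mod_cast card_filter_primitivePart_eq_le R p
    _ ≤ (R / supNorm p) * (1 / supNorm p) := by gcongr; exact Nat.cast_div_le
    _ = R * (1 / supNorm p ^ 2) := by field_simp

lemma card_supBall_prod_filter_omega2_eq_le (R : ℕ) (d : ℤ) :
    (#{q ∈ supBall R ×ˢ supBall R | omega2 q.1 q.2 = d} : ℝ)
      ≤ 72 * (R + 1) ^ 2 * (1 + Real.log (R + 1)) ^ 2 := by
  set L := 1 + Real.log (R + 1)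
  have hR : (0 : ℝ) ≤ R := R.cast_nonneg
  have hL : 1 ≤ L := le_add_of_nonneg_right (Real.log_nonneg (by linarith))
  have hball : (#(supBall R) : ℝ) ≤ 4 * (R + 1) ^ 2 := by
    rw [card_supBall]
    push_cast
    nlinarith
  have hfib : #{q ∈ supBall R ×ˢ supBall R | omega2 q.1 q.2 = d}
      = ∑ u ∈ supBall R, #{w ∈ supBall R | omega2 u w = d} := by
    simp only [card_filter, sum_product]
  have hzero : (0 : ℤ × ℤ) ∈ supBall R := mem_supBall.2 (by simp [supNorm])
  have hline : ∀ u ∈ (supBall R).erase 0, (#{w ∈ supBall R | omega2 u w = d} : ℝ)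
      ≤ 4 * R * (1 / supNorm (primitivePart u)) + 1 := fun u hu => by
    rw [mul_one_div]
    exact card_supBall_filter_omega2_eq_le (ne_of_mem_erase hu) R d
  have herase : (#((supBall R).erase 0) : ℝ) ≤ #(supBall R) := by
    exact_mod_cast card_erase_le
  rw [hfib, Nat.cast_sum, ← add_sum_erase _ _ hzero]
  calc (#{w ∈ supBall R | omega2 0 w = d} : ℝ)
        + ∑ u ∈ (supBall R).erase 0, (#{w ∈ supBall R | omega2 u w = d} : ℝ)
      ≤ #(supBall R)
          + ∑ u ∈ (supBall R).erase 0, (4 * R * (1 / supNorm (primitivePart u)) + 1 : ℝ) :=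
        add_le_add (by exact_mod_cast card_filter_le _ _) (sum_le_sum hline)
    _ = #(supBall R) + 4 * R * ∑ u ∈ (supBall R).erase 0, (1 / supNorm (primitivePart u) : ℝ)
          + #((supBall R).erase 0) := by
        rw [sum_add_distrib, ← mul_sum, sum_const, nsmul_one]
        ring
    _ ≤ 4 * (R + 1) ^ 2 + 4 * R * (R * (16 * L ^ 2)) + 4 * (R + 1) ^ 2 := by
        gcongr
        · exact (sum_inv_supNorm_primitivePart_le R).trans
            (by gcongr; exact sum_inv_supNorm_sq_le R)
        · exact herase.trans hball
    _ ≤ 72 * (R + 1) ^ 2 * L ^ 2 := by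
        have hL2 : 1 ≤ L ^ 2 := one_le_pow₀ hL
        have hR2 : (R : ℝ) ^ 2 ≤ (R + 1) ^ 2 := by gcongr; linarith
        nlinarith [mul_le_mul_of_nonneg_left hL2 (sq_nonneg ((R : ℝ) + 1)),
          mul_le_mul_of_nonneg_right hR2 (sq_nonneg L)]

lemma sub_mem_supBall {N : ℕ} {u v : ℤ × ℤ} (hu : u ∈ supBall N) (hv : v ∈ supBall N) :
    u - v ∈ supBall (2 * N) := by
  rw [mem_supBall] at *
  have := supNorm_sub_le u v
  omega

lemma mem_supBall_of_enorm2_le {m : ℤ × ℤ} {R : ℕ} (h : enorm2 m ≤ R) : m ∈ supBall R := by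
  have h1 : |(m.1 : ℝ)| ≤ R := (Real.abs_le_sqrt (by nlinarith)).trans h
  have h2 : |(m.2 : ℝ)| ≤ R := (Real.abs_le_sqrt (by nlinarith)).trans h
  rw [← Int.cast_abs, ← Int.cast_natCast, Int.cast_le, Int.abs_eq_natAbs, Nat.cast_le] at h1 h2
  exact mem_supBall.2 (max_le h1 h2)

lemma omega2_alternating_sum_eq (y m₁ m₂ m₃ : ℤ × ℤ) :
    omega2 y m₁ - omega2 (y - m₁) m₂ + omega2 (y - m₁ + m₂) m₃
      = omega2 y (m₁ - m₂ + m₃) + omega2 (m₂ - m₃) (m₂ - m₁) := by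
  simp only [omega2, Prod.fst_sub, Prod.snd_sub, Prod.fst_add, Prod.snd_add]
  ring

lemma ncard_le_card_supBall_prod_filter_omega2 {S : Set ((ℤ × ℤ) × (ℤ × ℤ) × (ℤ × ℤ))}
    {y A : ℤ × ℤ} {c : ℤ} {N : ℕ} (hS : ∀ m ∈ S, (m.1 ∈ supBall N ∧ m.2.1 ∈ supBall N ∧ m.2.2 ∈ supBall N) ∧
      m.1 - m.2.1 + m.2.2 = A ∧
      omega2 y m.1 - omega2 (y - m.1) m.2.1 + omega2 (y - m.1 + m.2.1) m.2.2 = c) :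
    S.ncard ≤ #{q ∈ supBall (2 * N) ×ˢ supBall (2 * N) | omega2 q.1 q.2 = c - omega2 y A} := by
  rw [← Set.ncard_coe_finset]
  refine Set.ncard_le_ncard_of_injOn (fun m => (m.2.1 - m.2.2, m.2.1 - m.1))
    (fun m hm => ?_) (fun m hm m' hm' h => ?_) (finite_toSet _)
  · obtain ⟨⟨h₁, h₂, h₃⟩, hA, hc⟩ := hS m hm
    rw [coe_filter, Set.mem_ofPred_eq, mem_product, ← hc, omega2_alternating_sum_eq, hA]
    exact ⟨⟨sub_mem_supBall h₂ h₃, sub_mem_supBall h₂ h₁⟩, by ring⟩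
  · have hA := (hS m hm).2.1
    have hA' := (hS m' hm').2.1
    obtain ⟨hu, hw⟩ := Prod.mk.inj h
    -- a triple is recovered from `(u, w)` through `m₂ = A + u + w`
    have h₂ : m.2.1 = m'.2.1 := by linear_combination hu + hw + hA - hA'
    exact Prod.ext (by linear_combination h₂ - hw) (Prod.ext h₂ (by linear_combination h₂ - hu))

lemma card_supBall_prod_filter_omega2_eq_le_two_pow (k : ℕ) (d : ℤ) :
    (#{q ∈ supBall (2 ^ k) ×ˢ supBall (2 ^ k) | omega2 q.1 q.2 = d} : ℝ)
      ≤ 288 * 4 ^ k * (k + 2) ^ 2 := by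
  have hR : ((2 ^ k : ℕ) : ℝ) + 1 ≤ 2 ^ (k + 1) := by
    push_cast
    rw [pow_succ]
    linarith [one_le_pow₀ (M₀ := ℝ) (n := k) one_le_two]
  have hlog : Real.log ((2 ^ k : ℕ) + 1) ≤ k + 1 := by
    calc Real.log ((2 ^ k : ℕ) + 1) ≤ Real.log (2 ^ (k + 1)) := Real.log_le_log (by positivity) hR
      _ = (k + 1) * Real.log 2 := by rw [Real.log_pow]; push_cast; ring
      _ ≤ k + 1 := mul_le_of_le_one_right (by positivity)
          (Real.log_two_lt_d9.le.trans (by norm_num))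
  refine (card_supBall_prod_filter_omega2_eq_le _ d).trans ?_
  have hlog0 : 0 ≤ Real.log ((2 ^ k : ℕ) + 1) :=
    Real.log_nonneg (by linarith [(2 ^ k : ℕ).cast_nonneg (α := ℝ)])
  calc (72 * (((2 ^ k : ℕ) : ℝ) + 1) ^ 2 * (1 + Real.log ((2 ^ k : ℕ) + 1)) ^ 2 : ℝ)
      ≤ 72 * (2 ^ (k + 1)) ^ 2 * (1 + (k + 1)) ^ 2 := by gcongr
    _ = 288 * 4 ^ k * (k + 2) ^ 2 := by
        rw [show (4 : ℝ) ^ k = (2 ^ k) ^ 2 by rw [← pow_mul, mul_comm, pow_mul]; norm_num]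
        ring

lemma exists_sq_add_four_le_mul_rpow {η : ℝ} (hη : 0 < η) :
    ∃ C > 0, ∀ x : ℝ, 0 ≤ x → (x + 4) ^ 2 ≤ C * 2 ^ (η * x) := by
  set a := η * Real.log 2
  have ha : 0 < a := mul_pos hη (Real.log_pos one_lt_two)
  refine ⟨4 / a ^ 2 + 32, by positivity, fun x hx => ?_⟩
  have hax : 0 ≤ a * x := by positivity
  have hexp : 1 + a * x + (a * x) ^ 2 / 2 ≤ (2 : ℝ) ^ (η * x) := by
    rw [Real.rpow_def_of_pos two_pos, show Real.log 2 * (η * x) = a * x by ring]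
    exact Real.quadratic_le_exp_of_nonneg hax
  have hquad : 4 / a ^ 2 * ((a * x) ^ 2 / 2) = 2 * x ^ 2 := by field_simp; ring
  calc (x + 4) ^ 2 ≤ 4 / a ^ 2 * ((a * x) ^ 2 / 2) + 32 := by nlinarith [sq_nonneg (x - 4)]
    _ ≤ (4 / a ^ 2 + 32) * (1 + a * x + (a * x) ^ 2 / 2) := by
        have : 0 ≤ 4 / a ^ 2 := by positivity
        nlinarith [sq_nonneg (a * x)]
    _ ≤ (4 / a ^ 2 + 32) * 2 ^ (η * x) := by gcongr

/-- For every `η > 0` there is a constant `C` (independent of `y`, `A`, `c`, `j`) such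
that for every `(A,c) ∈ ℤ² × ℤ`, every fixed `y ∈ ℤ²` and every `j ≥ 1`, the number of
triples `(m₁,m₂,m₃)` with `2ʲ ≤ |mₗ| < 2^(j+1)` satisfying `m₁ − m₂ + m₃ = A` and
`ω(y,m₁) − ω(y−m₁,m₂) + ω(y−m₁+m₂,m₃) = c` is at most `C·2^((2+η)j)`. -/
theorem triple_count (η : ℝ) (hη : 0 < η) :
    ∃ C : ℝ, 0 < C ∧ ∀ (y A : ℤ × ℤ) (c : ℤ) (j : ℕ), 1 ≤ j →
      ((Set.ncard {m : (ℤ × ℤ) × (ℤ × ℤ) × (ℤ × ℤ) |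
          ((2 : ℝ) ^ j ≤ enorm2 m.1 ∧ enorm2 m.1 < 2 ^ (j + 1)) ∧
          ((2 : ℝ) ^ j ≤ enorm2 m.2.1 ∧ enorm2 m.2.1 < 2 ^ (j + 1)) ∧
          ((2 : ℝ) ^ j ≤ enorm2 m.2.2 ∧ enorm2 m.2.2 < 2 ^ (j + 1)) ∧
          m.1 - m.2.1 + m.2.2 = A ∧
          omega2 y m.1 - omega2 (y - m.1) m.2.1
            + omega2 (y - m.1 + m.2.1) m.2.2 = c} : ℝ))
        ≤ C * (2 : ℝ) ^ ((2 + η) * j) := by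
  obtain ⟨C, hC, hpoly⟩ := exists_sq_add_four_le_mul_rpow hη
  refine ⟨4608 * C, by positivity, fun y A c j _ => ?_⟩
  have hball : ∀ {m : ℤ × ℤ}, enorm2 m < 2 ^ (j + 1) → m ∈ supBall (2 ^ (j + 1)) :=
    fun h => mem_supBall_of_enorm2_le (by push_cast; exact h.le)
  have hcount := card_supBall_prod_filter_omega2_eq_le_two_pow (j + 2) (c - omega2 y A)
  rw [pow_succ' 2 (j + 1)] at hcount
  calc _ ≤ (#{q ∈ supBall (2 * 2 ^ (j + 1)) ×ˢ supBall (2 * 2 ^ (j + 1)) |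
          omega2 q.1 q.2 = c - omega2 y A} : ℝ) :=
        Nat.cast_le.2 (ncard_le_card_supBall_prod_filter_omega2 fun m hm =>
          ⟨⟨hball hm.1.2, hball hm.2.1.2, hball hm.2.2.1.2⟩, hm.2.2.2⟩)
    _ ≤ 4608 * 4 ^ j * ((j : ℝ) + 4) ^ 2 := by
        refine hcount.trans (le_of_eq ?_)
        push_cast
        ring
    _ ≤ 4608 * 4 ^ j * (C * 2 ^ (η * j)) := by gcongr; exact hpoly j j.cast_nonneg
    _ = 4608 * C * 2 ^ ((2 + η) * j) := by
        rw [add_mul, Real.rpow_add two_pos, show (2 : ℝ) * j = ((2 * j : ℕ) : ℝ) by push_cast; ring,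
          Real.rpow_natCast, pow_mul]
        ring
end

section
/- Let T be a positive linear operator on functions on a countable measure space with counting measure, let E be a finite nonempty set with T χ_E measurable, let α > 0 and F = {x : α < T χ_E(x) < 2α}, with F nonempty, and set β = |E|⁻¹ ⟨χ_F, T χ_E⟩. Define E₀ = E, F₀ = F, and recursively E_{r+1} = {x ∈ E_r : T* χ_{F_r}(x) ≥ δ_r β}, F_{r+1} = {x ∈ F_r : T χ_{E_{r+1}}(x) ≥ ε_r α}. Then there exist constants δ_r, ε_r > 0 (independent of E, F, α) such that all sets E_r, F_r are nonempty. -/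
open Function

private noncomputable def Qop {ι : Type} (T : (ι → ℝ) →ₗ[ℝ] (ι → ℝ)) (A B : Set ι) : ℝ :=
  ∑' x, T (A.indicator 1) x * B.indicator 1 x

private lemma Qop_def {ι : Type} (T : (ι → ℝ) →ₗ[ℝ] (ι → ℝ)) (A B : Set ι) :
    Qop T A B = ∑' x, T (A.indicator 1) x * B.indicator 1 x := rfl

private lemma tsum_mul_ind {ι : Type} (f : ι → ℝ) (B : Set ι) (hB : B.Finite) :
    ∑' x, f x * B.indicator 1 x = ∑ x ∈ hB.toFinset, f x := by
  rw [tsum_eq_sum (s := hB.toFinset) (f := fun x => f x * B.indicator 1 x)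
    (fun x hx => by simp [Set.indicator_of_notMem (fun h => hx (hB.mem_toFinset.mpr h))])]
  exact Finset.sum_congr rfl fun x hx => by
    simp [Set.indicator_of_mem (hB.mem_toFinset.mp hx)]

private lemma tsum_ind_mul {ι : Type} (g : ι → ℝ) (A : Set ι) (hA : A.Finite) :
    ∑' x, A.indicator 1 x * g x = ∑ x ∈ hA.toFinset, g x := by
  have : ∀ x, A.indicator (1:ι→ℝ) x * g x = g x * A.indicator 1 x := fun x => mul_comm _ _
  rw [tsum_congr this, tsum_mul_ind g A hA]

private lemma Qop_sum {ι : Type} (T : (ι → ℝ) →ₗ[ℝ] (ι → ℝ)) (A B : Set ι) (hB : B.Finite) :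
    Qop T A B = ∑ x ∈ hB.toFinset, T (A.indicator 1) x :=
  tsum_mul_ind _ _ hB

private lemma Qop_splitA {ι : Type} (T : (ι → ℝ) →ₗ[ℝ] (ι → ℝ)) (A' A B : Set ι)
    (hsub : A' ⊆ A) (hB : B.Finite) :
    Qop T A B = Qop T A' B + Qop T (A \ A') B := by
  have hind : A.indicator (1:ι→ℝ) = fun x => A'.indicator 1 x + (A \ A').indicator 1 x := by
    rw [← Set.indicator_union_of_disjoint disjoint_sdiff_self_right, Set.union_diff_cancel hsub]
  rw [Qop_sum T A B hB, Qop_sum T A' B hB, Qop_sum T (A \ A') B hB, ← Finset.sum_add_distrib]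
  refine Finset.sum_congr rfl fun x _ => ?_
  have : A.indicator (1:ι→ℝ) = A'.indicator 1 + (A \ A').indicator 1 := by
    funext y; rw [hind]; rfl
  rw [this, map_add]; rfl

private lemma Qop_splitB {ι : Type} (T : (ι → ℝ) →ₗ[ℝ] (ι → ℝ)) (A B' B : Set ι)
    (hsub : B' ⊆ B) (hB : B.Finite) :
    Qop T A B = Qop T A B' + Qop T A (B \ B') := by
  classical
  have hB' : B'.Finite := hB.subset hsub
  have hrem : (B \ B').Finite := hB.diff
  rw [Qop_sum T A B hB, Qop_sum T A B' hB', Qop_sum T A _ hrem, ← Finset.sum_union (by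
    simp only [Finset.disjoint_left, Set.Finite.mem_toFinset]
    intro x hx hx2; exact hx2.2 hx)]
  refine Finset.sum_congr ?_ fun x _ => rfl
  ext x
  simp only [Set.Finite.mem_toFinset, Finset.mem_union]
  constructor
  · intro h; by_cases hx : x ∈ B'
    · exact Or.inl hx
    · exact Or.inr ⟨h, hx⟩
  · rintro (h | h)
    · exact hsub h
    · exact h.1

/-- Christ's iteration lemma: for a positive linear operator `T` on functions on a
countable set with counting measure (with adjoint `Tstar`), a finite nonempty set `E`,
`α > 0`, `F = {x : α < Tχ_E(x) < 2α}` nonempty (and finite), and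
`β = |E|⁻¹⟨χ_F, Tχ_E⟩`, there exist constants `δ_r, ε_r > 0` (independent of the data)
such that the recursively defined sets
`E₀ = E`, `F₀ = F`, `E_{r+1} = {x ∈ E_r : T*χ_{F_r}(x) ≥ δ_r β}`,
`F_{r+1} = {x ∈ F_r : Tχ_{E_{r+1}}(x) ≥ ε_r α}` are all nonempty. -/
theorem christ_iteration_lemma :
    ∃ δ ε : ℕ → ℝ, (∀ r, 0 < δ r) ∧ (∀ r, 0 < ε r) ∧
    ∀ (ι : Type) [Countable ι]
      (T Tstar : (ι → ℝ) →ₗ[ℝ] (ι → ℝ)),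
      (∀ f : ι → ℝ, (∀ x, 0 ≤ f x) → ∀ x, 0 ≤ T f x) →
      (∀ f g : ι → ℝ, (support f).Finite → (support g).Finite →
        ∑' x, T f x * g x = ∑' x, f x * Tstar g x) →
      ∀ (E : Finset ι), E.Nonempty →
      ∀ α : ℝ, 0 < α →
      ∀ (F : Set ι) (hF : F.Finite), F.Nonempty →
      F = {x | α < T ((E : Set ι).indicator 1) x ∧ T ((E : Set ι).indicator 1) x < 2 * α} →
      ∀ β : ℝ,
      β = (E.card : ℝ)⁻¹ * ∑ x ∈ hF.toFinset, T ((E : Set ι).indicator 1) x →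
      ∀ Es Fs : ℕ → Set ι,
      Es 0 = (E : Set ι) → Fs 0 = F →
      (∀ r, Es (r + 1) = {x ∈ Es r | δ r * β ≤ Tstar ((Fs r).indicator 1) x}) →
      (∀ r, Fs (r + 1) = {x ∈ Fs r | ε r * α ≤ T ((Es (r + 1)).indicator 1) x}) →
      ∀ r, (Es r).Nonempty ∧ (Fs r).Nonempty := by
  refine ⟨fun r => (1/2:ℝ)^r / 4, fun r => (1/2:ℝ)^r / 4,
    fun r => by positivity, fun r => by positivity, ?_⟩
  intro ι _ T Tstar hpos hadj E hEne α hα F hFfin hFne hFdef β hβ Es Fs hE0 hF0 hEs hFs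
  have hEcard : (0:ℝ) < E.card := by exact_mod_cast Finset.card_pos.mpr hEne
  have hM : β * E.card = ∑ x ∈ hFfin.toFinset, T ((E : Set ι).indicator 1) x := by
    rw [hβ]; field_simp
  have htermα : ∀ x ∈ hFfin.toFinset, α ≤ T ((E : Set ι).indicator 1) x := by
    intro x hx
    have hx' := hFfin.mem_toFinset.mp hx
    rw [hFdef] at hx'
    exact hx'.1.le
  have hFcard : 0 < hFfin.toFinset.card :=
    Finset.card_pos.mpr (by rwa [Set.Finite.toFinset_nonempty])
  have hsum_ge : α * hFfin.toFinset.card ≤ β * E.card := by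
    rw [hM]
    have h := Finset.card_nsmul_le_sum hFfin.toFinset _ α htermα
    rw [nsmul_eq_mul] at h
    linarith
  have hMpos : 0 < β * E.card :=
    lt_of_lt_of_le (mul_pos hα (by exact_mod_cast hFcard)) hsum_ge
  have hβpos : 0 < β := by
    by_contra h
    push_neg at h
    nlinarith
  have hadjQ : ∀ (A B : Set ι) (hA : A.Finite) (hB : B.Finite),
      Qop T A B = ∑ x ∈ hA.toFinset, Tstar (B.indicator 1) x := by
    intro A B hA hB
    have h1 : (support ((A).indicator (1:ι→ℝ))).Finite :=
      hA.subset Set.support_indicator_subset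
    have h2 : (support ((B).indicator (1:ι→ℝ))).Finite :=
      hB.subset Set.support_indicator_subset
    rw [Qop_def, hadj _ _ h1 h2, tsum_ind_mul _ _ hA]
  have main : ∀ r, Es r ⊆ ↑E ∧ Fs r ⊆ F ∧
      (1/2:ℝ)^r * (β * E.card) ≤ Qop T (Es r) (Fs r) := by
    intro r
    induction r with
    | zero =>
      refine ⟨by rw [hE0], by rw [hF0], ?_⟩
      rw [hE0, hF0, Qop_sum T _ _ hFfin, pow_zero, one_mul, hM]
    | succ r ih =>
      obtain ⟨hEsub, hFsub, hSr⟩ := ih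
      have hAfin : (Es r).Finite := E.finite_toSet.subset hEsub
      have hBfin : (Fs r).Finite := hFfin.subset hFsub
      have hA'sub : Es (r+1) ⊆ Es r := by rw [hEs r]; exact fun x hx => hx.1
      have hB'sub : Fs (r+1) ⊆ Fs r := by rw [hFs r]; exact fun x hx => hx.1
      refine ⟨hA'sub.trans hEsub, hB'sub.trans hFsub, ?_⟩
      have hrem1 : Qop T (Es r \ Es (r+1)) (Fs r) ≤ (1/2:ℝ)^r / 4 * (β * E.card) := by
        rw [hadjQ _ _ hAfin.diff hBfin]
        have hterm : ∀ x ∈ (hAfin.diff (t := Es (r+1))).toFinset,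
            Tstar ((Fs r).indicator 1) x ≤ (1/2:ℝ)^r / 4 * β := by
          intro x hx
          rw [Set.Finite.mem_toFinset] at hx
          by_contra h
          push_neg at h
          exact hx.2 (by rw [hEs r]; exact ⟨hx.1, h.le⟩)
        have hcard : ((hAfin.diff (t := Es (r+1))).toFinset.card : ℝ) ≤ (E.card : ℝ) := by
          exact_mod_cast Finset.card_le_card (by
            intro x hx
            rw [Set.Finite.mem_toFinset] at hx
            exact hEsub hx.1)
        calc ∑ x ∈ (hAfin.diff (t := Es (r+1))).toFinset, Tstar ((Fs r).indicator 1) x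
            ≤ (hAfin.diff (t := Es (r+1))).toFinset.card • ((1/2:ℝ)^r / 4 * β) :=
              Finset.sum_le_card_nsmul _ _ _ hterm
          _ = ((hAfin.diff (t := Es (r+1))).toFinset.card : ℝ) * ((1/2:ℝ)^r / 4 * β) :=
              nsmul_eq_mul _ _
          _ ≤ (E.card : ℝ) * ((1/2:ℝ)^r / 4 * β) :=
              mul_le_mul_of_nonneg_right hcard (mul_nonneg (by positivity) hβpos.le)
          _ = (1/2:ℝ)^r / 4 * (β * E.card) := by ring
      have hrem2 : Qop T (Es (r+1)) (Fs r \ Fs (r+1)) ≤ (1/2:ℝ)^r / 4 * (β * E.card) := by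
        rw [Qop_sum T _ _ hBfin.diff]
        have hterm : ∀ x ∈ (hBfin.diff (t := Fs (r+1))).toFinset,
            T ((Es (r+1)).indicator 1) x ≤ (1/2:ℝ)^r / 4 * α := by
          intro x hx
          rw [Set.Finite.mem_toFinset] at hx
          by_contra h
          push_neg at h
          exact hx.2 (by rw [hFs r]; exact ⟨hx.1, h.le⟩)
        have hcard : ((hBfin.diff (t := Fs (r+1))).toFinset.card : ℝ) ≤ (hFfin.toFinset.card : ℝ) := by
          exact_mod_cast Finset.card_le_card (by
            intro x hx
            rw [Set.Finite.mem_toFinset] at hx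
            rw [Set.Finite.mem_toFinset]
            exact hFsub hx.1)
        calc ∑ x ∈ (hBfin.diff (t := Fs (r+1))).toFinset, T ((Es (r+1)).indicator 1) x
            ≤ (hBfin.diff (t := Fs (r+1))).toFinset.card • ((1/2:ℝ)^r / 4 * α) :=
              Finset.sum_le_card_nsmul _ _ _ hterm
          _ = ((hBfin.diff (t := Fs (r+1))).toFinset.card : ℝ) * ((1/2:ℝ)^r / 4 * α) :=
              nsmul_eq_mul _ _
          _ ≤ (hFfin.toFinset.card : ℝ) * ((1/2:ℝ)^r / 4 * α) :=
              mul_le_mul_of_nonneg_right hcard (by positivity)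
          _ = (1/2:ℝ)^r / 4 * (α * hFfin.toFinset.card) := by ring
          _ ≤ (1/2:ℝ)^r / 4 * (β * E.card) :=
              mul_le_mul_of_nonneg_left hsum_ge (by positivity)
      have hs1 := Qop_splitA T (Es (r+1)) (Es r) (Fs r) hA'sub hBfin
      have hs2 := Qop_splitB T (Es (r+1)) (Fs (r+1)) (Fs r) hB'sub hBfin
      rw [pow_succ]
      nlinarith [hs1, hs2, hrem1, hrem2, hSr]
  intro r
  obtain ⟨-, -, hSr⟩ := main r
  have hQpos : 0 < Qop T (Es r) (Fs r) :=
    lt_of_lt_of_le (mul_pos (by positivity) hMpos) hSr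
  constructor
  · rw [Set.nonempty_iff_ne_empty]
    intro h
    rw [h] at hQpos
    have hz : Qop T (∅ : Set ι) (Fs r) = 0 := by
      have h0 : (∅ : Set ι).indicator (1:ι→ℝ) = 0 := Set.indicator_empty _
      rw [Qop_def, h0, map_zero]
      simp
    rw [hz] at hQpos
    exact lt_irrefl 0 hQpos
  · rw [Set.nonempty_iff_ne_empty]
    intro h
    rw [h] at hQpos
    have hz : Qop T (Es r) (∅ : Set ι) = 0 := by
      rw [Qop_def]
      simp
    rw [hz] at hQpos
    exact lt_irrefl 0 hQpos
end
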